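/- Let F be a definite Horn formula such that F ⊨ B → B' holds for every clause B' → x ∈ F. Then F is logically equivalent to HCLOSE(RCN(B,F),F), where HCLOSE(H,F) = {B' → x | F ⊨ B' → x, x ∈ H \ B', and no proper subset B'' ⊂ B' satisfies F ⊨ B'' → x}. -/

import Mathlib

/-- A definite Horn clause: a finite body of variables implying a head variable. -/
structure Clause (V : Type) where
  body : Finset V
  head : V
deriving DecidableEq

variable {V : Type} [DecidableEq V]

/-- A model satisfies a clause when the head is true if the whole body is true. -/
def satClause (M : V → Prop) (c : Clause V) : Prop :=
  (∀ v ∈ c.body, M v) → M c.head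

/-- A model satisfies a set of clauses when it satisfies each of them. -/
def satSet (M : V → Prop) (S : Set (Clause V)) : Prop :=
  ∀ c ∈ S, satClause M c

/-- `EntV S A x`: the formula `S` together with the variables `A` entails variable `x`. -/
def EntV (S : Set (Clause V)) (A : Set V) (x : V) : Prop :=
  ∀ M : V → Prop, satSet M S → (∀ v ∈ A, M v) → M x

/-- `EntVS S A B`: `S ⊨ A → B`, i.e. `S` with `A` entails every variable of `B`. -/
def EntVS (S : Set (Clause V)) (A B : Set V) : Prop :=
  ∀ x ∈ B, EntV S A x

/-- `EntF S T`: `S` entails every clause of `T`. -/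
def EntF (S T : Set (Clause V)) : Prop :=
  ∀ c ∈ T, EntV S (↑c.body) c.head

/-- Logical equivalence of two sets of clauses: same models. -/
def EquivS (S T : Set (Clause V)) : Prop :=
  ∀ M : V → Prop, satSet M S ↔ satSet M T

/-- `BCN`: all variable consequences of `B` under the formula `S`. -/
def BCN (S : Set (Clause V)) (B : Set V) : Set V :=
  {x | EntV S B x}

/-- `RCN`: real consequences of `B` under `S`. -/
def RCN (S : Set (Clause V)) (B : Set V) : Set V :=
  {x | EntV S (BCN S B \ {x}) x}

/-- `F^x`: `F` without the clauses mentioning `x` in head or body. -/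
def Fx (F : Finset (Clause V)) (x : V) : Finset (Clause V) :=
  F.filter (fun c => x ∉ c.body ∧ c.head ≠ x)

/-- A formula is single-head when no two distinct clauses share the head. -/
def SingleHead (F : Finset (Clause V)) : Prop :=
  ∀ c ∈ F, ∀ d ∈ F, c.head = d.head → c = d

/-- `UCL(B,F)`: non-tautological clauses of `F` whose body is entailed by `B` according to `F`. -/
def UCL (B : Set V) (F : Finset (Clause V)) : Set (Clause V) :=
  {c | c ∈ F ∧ c.head ∉ c.body ∧ EntVS (↑F) B (↑c.body)}

/-- `UCL(B,G,F)`: clauses of `G` whose body is entailed by `B` according to `F`. -/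
def UCL3 (B : Set V) (G F : Finset (Clause V)) : Set (Clause V) :=
  {c | c ∈ G ∧ EntVS (↑F) B (↑c.body)}

/-- `SCL(B,F)`: clauses of strictly entailed bodies. -/
def SCL (B : Set V) (F : Finset (Clause V)) : Set (Clause V) :=
  {c | c.head ∉ c.body ∧ EntV (↑F) (↑c.body) c.head ∧
       EntVS (↑F) B (↑c.body) ∧ ¬ EntVS (↑F) (↑c.body) B}

/-- `BCL(B,F)`: clauses of equivalent bodies. -/
def BCL (B : Set V) (F : Finset (Clause V)) : Set (Clause V) :=
  {c | c.head ∉ c.body ∧ EntV (↑F) (↑c.body) c.head ∧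
       EntVS (↑F) B (↑c.body) ∧ EntVS (↑F) (↑c.body) B}

/-- `HCLOSE(H,S)`: body-minimal non-tautological entailed clauses with head in `H`. -/
def HCLOSE (H : Set V) (S : Set (Clause V)) : Set (Clause V) :=
  {c | EntV S (↑c.body) c.head ∧ c.head ∈ H ∧ c.head ∉ c.body ∧
       ∀ B'' : Finset V, B'' ⊂ c.body → ¬ EntV S (↑B'') c.head}

/-- One resolution step: resolve a clause of `S` into the body of `c`. -/
def Step (S : Set (Clause V)) (c d : Clause V) : Prop :=
  ∃ e ∈ S, e.head ∈ c.body ∧ d = ⟨(c.body \ {e.head}) ∪ e.body, c.head⟩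

/-! Every clause of `F` entails its own head from `BCN(B,F)` minus that head (the hypothesis puts
its body inside `BCN(B,F)`), so a non-tautological clause of `F` has its head in `RCN(B,F)`; it
is then subsumed by a body-minimal entailed clause with the same head, which lies in `HCLOSE`. -/

section

omit [DecidableEq V]

theorem satClause_of_head_mem_body {M : V → Prop} {c : Clause V} (h : c.head ∈ c.body) :
    satClause M c :=
  fun hbody => hbody _ h

theorem satClause_of_body_subset {M : V → Prop} {c d : Clause V} (hhead : d.head = c.head)
    (hbody : d.body ⊆ c.body) (hd : satClause M d) : satClause M c :=
  fun hc => hhead ▸ hd fun v hv => hc v (hbody hv)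

theorem EntV.mono {S : Set (Clause V)} {A A' : Set V} {x : V} (hA : A ⊆ A') (h : EntV S A x) :
    EntV S A' x :=
  fun M hM hA' => h M hM fun v hv => hA' v (hA hv)

theorem entV_of_mem {S : Set (Clause V)} {c : Clause V} (hc : c ∈ S) : EntV S c.body c.head :=
  fun _ hM hbody => hM c hc hbody

theorem EntF.satSet {S T : Set (Clause V)} {M : V → Prop} (hST : EntF S T) (hM : satSet M S) :
    satSet M T :=
  fun c hc hbody => hST c hc M hM hbody

theorem entF_HCLOSE (H : Set V) (S : Set (Clause V)) : EntF S (HCLOSE H S) :=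
  fun _ hc => hc.1

theorem head_mem_RCN {S : Set (Clause V)} {B : Set V} {c : Clause V} (hc : c ∈ S)
    (hnt : c.head ∉ c.body) (hB : EntVS S B c.body) : c.head ∈ RCN S B :=
  (entV_of_mem hc).mono fun v hv => ⟨hB v hv, fun hvx => hnt (hvx ▸ hv)⟩

theorem exists_minimal_body {S : Set (Clause V)} {b : Finset V} {x : V} (h : EntV S b x) :
    ∃ b' ⊆ b, EntV S b' x ∧ ∀ b'' ⊂ b', ¬ EntV S b'' x := by
  obtain ⟨b', ⟨hsub, hent⟩, hmin⟩ :=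
    wellFounded_lt.has_min {b' : Finset V | b' ⊆ b ∧ EntV S b' x} ⟨b, subset_rfl, h⟩
  exact ⟨b', hsub, hent, fun b'' hlt hb'' => hmin b'' ⟨hlt.subset.trans hsub, hb''⟩ hlt⟩

theorem exists_mem_HCLOSE_subsumes {H : Set V} {S : Set (Clause V)} {c : Clause V}
    (hent : EntV S c.body c.head) (hH : c.head ∈ H) (hnt : c.head ∉ c.body) :
    ∃ d ∈ HCLOSE H S, d.head = c.head ∧ d.body ⊆ c.body := by
  obtain ⟨b', hsub, hb', hmin⟩ := exists_minimal_body hent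
  exact ⟨⟨b', c.head⟩, ⟨hb', hH, fun hmem => hnt (hsub hmem), hmin⟩, rfl, hsub⟩

end

theorem stmt16 (F : Finset (Clause V)) (B : Set V)
    (h : ∀ c ∈ F, EntVS (↑F) B (↑c.body)) :
    EquivS (↑F) (HCLOSE (RCN (↑F) B) (↑F)) := by
  refine fun M => ⟨(entF_HCLOSE _ _).satSet, fun hM c hc => ?_⟩
  by_cases hnt : c.head ∈ c.body
  · exact satClause_of_head_mem_body hnt
  obtain ⟨d, hd, hhead, hbody⟩ :=
    exists_mem_HCLOSE_subsumes (entV_of_mem hc) (head_mem_RCN hc hnt (h c hc)) hnt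
  exact satClause_of_body_subset hhead hbody (hM d hd)
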